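/- For all elements c, s, x₁, x₂, x₃, x₄, y₁, y₂, y₃, y₄ of a commutative ring, define x'₁ = c·x₁ + s·y₂, y'₂ = −s·x₁ + c·y₂, x'₂ = c·x₂ + s·y₁, y'₁ = −s·x₂ + c·y₁, x'₃ = c·x₃ + s·y₄, y'₄ = −s·x₃ + c·y₄, x'₄ = c·x₄ + s·y₃, y'₃ = −s·x₄ + c·y₃. Then Q(x'₁,x'₂,x'₃,x'₄,y'₁,y'₂,y'₃,y'₄) = (c² + s²)² · Q(x₁,x₂,x₃,x₄,y₁,y₂,y₃,y₄). -/
import Mathlib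


/-- The homogenised regular quadruple polynomial. -/
def Q {R : Type*} [CommRing R] (x1 x2 x3 x4 y1 y2 y3 y4 : R) : R :=
  x1^2*y1^2 + x2^2*y2^2 + x3^2*y3^2 + x4^2*y4^2
    - 4*x1*x2*x3*x4 - 4*y1*y2*y3*y4
    - 2*x1*y1*x2*y2 - 2*x1*y1*x3*y3 - 2*x1*y1*x4*y4
    - 2*x2*y2*x3*y3 - 2*x2*y2*x4*y4 - 2*x3*y3*x4*y4

theorem Q_rotation_covariance {R : Type*} [CommRing R]
    (c s x1 x2 x3 x4 y1 y2 y3 y4 : R) :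
    Q (c*x1 + s*y2) (c*x2 + s*y1) (c*x3 + s*y4) (c*x4 + s*y3)
      (-s*x2 + c*y1) (-s*x1 + c*y2) (-s*x4 + c*y3) (-s*x3 + c*y4)
      = (c^2 + s^2)^2 * Q x1 x2 x3 x4 y1 y2 y3 y4 := by
  unfold Q; ring
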